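/- arXiv:1005.4083 — 2 statements merged into one kernel-verified Lean document; each statement's English description precedes it below -/
import Mathlib

section
/- Fix a ∈ ℝ. For each choice of signs ε, δ ∈ {+1, −1}, the double integral ∫₀^∞ ∫₀^∞ exp( 2·Re( μ(t)³/6 − a·μ(t) − ξ(s)³/6 ) ) / |ξ(s) − μ(t)|² dt ds is finite, where μ(t) := 1 + t·e^{iεπ/3} and ξ(s) := −1 − s·e^{iδπ/3}. In particular the kernel (ξ,μ) ↦ e^{μ³/6 − aμ − ξ³/6}/(2πi(ξ − μ)) is square-integrable with respect to arclength on γ_L × γ_R, where γ_R := {1 + t e^{iπ/3} : t ≥ 0} ∪ {1 + t e^{−iπ/3} : t ≥ 0} and γ_L := −γ_R. -/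
open Complex MeasureTheory Real

private lemma expc_vals (ε : ℝ) (hε : ε = 1 ∨ ε = -1) :
    (Complex.exp (I * ε * π / 3)).re = 1/2 ∧ (Complex.exp (I * ε * π / 3)).im ^ 2 = 3/4 := by
  have h3 : Real.sqrt 3 ^ 2 = 3 := Real.sq_sqrt (by norm_num)
  rcases hε with h | h <;> subst h <;>
    constructor <;>
    simp [Complex.exp_re, Complex.exp_im, neg_div, Real.cos_pi_div_three,
      Real.sin_pi_div_three] <;>
    nlinarith [h3]

private lemma re_calc (a t s : ℝ) (c d : ℂ) (hc : c.re = 1/2) (hc2 : c.im^2 = 3/4)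
    (hd : d.re = 1/2) (hd2 : d.im^2 = 3/4) :
    ((1 + (t:ℂ)*c)^3/6 - (a:ℂ)*(1+(t:ℂ)*c) - (-1-(s:ℂ)*d)^3/6).re
    = ((1 + 3*t/2 - 3*t^2/2 - t^3)/6 - a*(1+t/2)) + (1 + 3*s/2 - 3*s^2/2 - s^3)/6 := by
  simp only [Complex.sub_re, Complex.div_re, Complex.normSq_apply, pow_succ, pow_zero, one_mul,
    Complex.mul_re, Complex.mul_im, Complex.add_re, Complex.add_im, Complex.one_re,
    Complex.one_im, Complex.ofReal_re, Complex.ofReal_im, Complex.neg_re, Complex.neg_im,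
    Complex.sub_im, Complex.re_ofNat, Complex.im_ofNat]
  rw [hc, hd]
  linear_combination (-(t^2)/2 - t^3/4) * hc2 + (-(s^2)/2 - s^3/4) * hd2

private lemma F_bound (a t : ℝ) (ht : 0 ≤ t) :
    2 * ((1 + 3*t/2 - 3*t^2/2 - t^3)/6 - a*(1+t/2))
      ≤ (1/3 + 2*|a| + (3/2+|a|)^2/2) - t := by
  nlinarith [sq_nonneg (t - (3/2 + |a|)), le_abs_self a, neg_abs_le a, abs_nonneg a,
    pow_nonneg ht 3, mul_nonneg ht (by linarith [neg_abs_le a] : (0:ℝ) ≤ a + |a|)]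

private lemma G_bound (s : ℝ) (hs : 0 ≤ s) :
    2 * ((1 + 3*s/2 - 3*s^2/2 - s^3)/6) ≤ (1/3 + 9/8) - s := by
  nlinarith [sq_nonneg (s - 3/2), pow_nonneg hs 3]

private lemma aux_prod (K L : ℝ) :
    MeasureTheory.Integrable
      (fun p : ℝ × ℝ => (K * Real.exp (-p.1)) * (L * Real.exp (-p.2)))
      (MeasureTheory.volume.restrict (Set.Ioi (0:ℝ) ×ˢ Set.Ioi (0:ℝ))) := by
  have base : IntegrableOn (fun x : ℝ => Real.exp (-x)) (Set.Ioi 0) := by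
    simpa using exp_neg_integrableOn_Ioi 0 one_pos
  have h1 : IntegrableOn (fun x : ℝ => K * Real.exp (-x)) (Set.Ioi 0) := base.const_mul _
  have h2 : IntegrableOn (fun x : ℝ => L * Real.exp (-x)) (Set.Ioi 0) := base.const_mul _
  have h := Integrable.mul_prod h1 h2
  rwa [Measure.prod_restrict, ← Measure.volume_eq_prod] at h

private lemma pointwise_bound (a t s : ℝ) (c d : ℂ) (hc : c.re = 1/2) (hc2 : c.im^2 = 3/4)
    (hd : d.re = 1/2) (hd2 : d.im^2 = 3/4) (ht' : 0 ≤ t) (hs' : 0 ≤ s) :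
    Real.exp (2 * (((1 + (t:ℂ)*c)^3/6 - (a:ℂ)*(1+(t:ℂ)*c) - (-1-(s:ℂ)*d)^3/6).re)) /
      ‖(-1 - (s:ℂ)*d) - (1 + (t:ℂ)*c)‖ ^ 2
    ≤ (Real.exp (1/3 + 2*|a| + (3/2+|a|)^2/2) * Real.exp (-t)) *
      (Real.exp (1/3 + 9/8) / 4 * Real.exp (-s)) := by
  set A : ℝ := 1/3 + 2*|a| + (3/2+|a|)^2/2 with hA
  set B : ℝ := 1/3 + 9/8 with hB
  have hden : (2:ℝ) ≤ ‖(-1 - (s:ℂ)*d) - (1 + (t:ℂ)*c)‖ := by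
    have hre : ((-1 - (s:ℂ)*d) - (1 + (t:ℂ)*c)).re = -2 - s/2 - t/2 := by
      simp [Complex.sub_re, Complex.add_re, Complex.mul_re, hc, hd]
      ring
    calc (2:ℝ) ≤ |(-2 - s/2 - t/2 : ℝ)| := by
          rw [abs_of_nonpos (by linarith)]; linarith
      _ = |((-1 - (s:ℂ)*d) - (1 + (t:ℂ)*c)).re| := by rw [hre]
      _ ≤ ‖(-1 - (s:ℂ)*d) - (1 + (t:ℂ)*c)‖ := Complex.abs_re_le_norm _
  have hden4 : (4:ℝ) ≤ ‖(-1 - (s:ℂ)*d) - (1 + (t:ℂ)*c)‖ ^ 2 := by nlinarith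
  have hnum : Real.exp (2 * (((1 + (t:ℂ)*c)^3/6 - (a:ℂ)*(1+(t:ℂ)*c)
      - (-1-(s:ℂ)*d)^3/6).re)) ≤ Real.exp (A - t) * Real.exp (B - s) := by
    rw [← Real.exp_add]
    apply Real.exp_le_exp.mpr
    rw [re_calc a t s c d hc hc2 hd hd2]
    have h1 := F_bound a t ht'
    have h2 := G_bound s hs'
    rw [hA, hB]; linarith [h1, h2]
  have step : Real.exp (2 * (((1 + (t:ℂ)*c)^3/6 - (a:ℂ)*(1+(t:ℂ)*c)
        - (-1-(s:ℂ)*d)^3/6).re)) / ‖(-1 - (s:ℂ)*d) - (1 + (t:ℂ)*c)‖ ^ 2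
      ≤ (Real.exp (A - t) * Real.exp (B - s)) / 4 :=
    div_le_div₀ (by positivity) hnum (by norm_num) hden4
  refine step.trans (le_of_eq ?_)
  simp only [Real.exp_sub, Real.exp_neg]; ring

set_option maxHeartbeats 1000000 in
/-- Hilbert–Schmidt estimate for the operator `𝒢_a` of the Airy analysis:
for each choice of ray directions, the double integral
`∫₀^∞∫₀^∞ exp(2 Re(μ³/6 − aμ − ξ³/6)) / |ξ − μ|² dt ds` is finite, where
`μ(t) = 1 + t e^{iεπ/3}` runs over `γ_R` and `ξ(s) = −1 − s e^{iδπ/3}` over `γ_L`. -/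
theorem stmt2 (a : ℝ) (ε δ : ℝ) (hε : ε = 1 ∨ ε = -1) (hδ : δ = 1 ∨ δ = -1) :
    MeasureTheory.IntegrableOn
      (fun p : ℝ × ℝ =>
        Real.exp (2 * (((1 + (p.1 : ℂ) * Complex.exp (I * ε * π / 3)) ^ 3 / 6
            - (a : ℂ) * (1 + (p.1 : ℂ) * Complex.exp (I * ε * π / 3))
            - (-1 - (p.2 : ℂ) * Complex.exp (I * δ * π / 3)) ^ 3 / 6).re)) /
          ‖(-1 - (p.2 : ℂ) * Complex.exp (I * δ * π / 3))
            - (1 + (p.1 : ℂ) * Complex.exp (I * ε * π / 3))‖ ^ 2)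
      (Set.Ioi (0 : ℝ) ×ˢ Set.Ioi (0 : ℝ)) := by
  obtain ⟨hc, hc2⟩ := expc_vals ε hε
  obtain ⟨hd, hd2⟩ := expc_vals δ hδ
  apply Integrable.mono'
    (g := fun p : ℝ × ℝ => (Real.exp (1/3 + 2*|a| + (3/2+|a|)^2/2) * Real.exp (-p.1)) *
      (Real.exp (1/3 + 9/8) / 4 * Real.exp (-p.2)))
  · exact aux_prod _ _
  · apply Measurable.aestronglyMeasurable
    apply Measurable.div
    · fun_prop
    · exact ((continuous_norm.comp (by fun_prop)).pow 2).measurable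
  · rw [ae_restrict_iff' ((measurableSet_Ioi).prod measurableSet_Ioi)]
    filter_upwards with p hp
    obtain ⟨ht, hs⟩ := hp
    have hb := pointwise_bound a p.1 p.2 _ _ hc hc2 hd hd2 (le_of_lt ht) (le_of_lt hs)
    rw [Real.norm_eq_abs, _root_.abs_of_nonneg (by positivity)]
    exact hb
end

section
/- Let c be the real cube root of 3, and for real Λ ≥ 1 and σ ∈ ℝ set a₊(σ) := 2Λ⁹ − cΛσ, C(σ) := (3/4)Λ¹² − cΛ⁴σ, and Θ̂₊(z) := (Λ³z)⁴/4 − (3Λ⁶/2)(Λ³z)² − a₊(σ)·Λ³z − C(σ) for z ∈ ℂ. Let K₂ < 2. Then there exists Λ₀ ≥ 1 such that for all Λ ≥ Λ₀, all real σ ≤ K₂ c^{−1} Λ⁸, both signs ε ∈ {+1,−1}, and all t ≥ 0: Re Θ̂₊(1 + (1 + εi)t) ≤ −Λ¹² t⁴ − 2(2 − K₂)Λ¹². Consequently sup_{t ≥ 0} |e^{Θ̂₊(1 + (1+εi)t)}| ≤ e^{−2(2−K₂)Λ¹²}, and for every real p ≥ 1, ( 2∫₀^∞ exp( p · Re Θ̂₊(1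 + (1+εi)t) ) dt )^{1/p} ≤ e^{−2(2−K₂)Λ¹²}. -/
open Complex Real MeasureTheory

/-- The rescaled, recentered Pearcey phase
`Θ̂₊(z) = Θ_{a₊(σ)}(3Λ⁶; Λ³z) − C(σ)` with `a₊(σ) = 2Λ⁹ − cΛσ` and
`C(σ) = (3/4)Λ¹² − cΛ⁴σ`. -/
noncomputable def thetaHatPlus (c Λ σ : ℝ) (z : ℂ) : ℂ :=
  ((Λ : ℂ) ^ 3 * z) ^ 4 / 4 - ((3 * (Λ : ℂ) ^ 6) / 2) * ((Λ : ℂ) ^ 3 * z) ^ 2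
    - ((2 * Λ ^ 9 - c * Λ * σ : ℝ) : ℂ) * ((Λ : ℂ) ^ 3 * z)
    - ((3 / 4 * Λ ^ 12 - c * Λ ^ 4 * σ : ℝ) : ℂ)

lemma re_eval (c Λ σ t ε : ℝ) (hε : ε = 1 ∨ ε = -1) :
    (thetaHatPlus c Λ σ (1 + (1 + (ε : ℂ) * I) * (t : ℂ))).re
      = -Λ^12*(t^4+2*t^3+4*t+4) + c*Λ^4*σ*(2+t) := by
  rcases hε with h | h <;> subst h <;>
    simp [thetaHatPlus, Complex.add_re, Complex.sub_re, Complex.mul_re, Complex.mul_im,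
      Complex.div_re, Complex.add_im, Complex.sub_im, Complex.normSq, pow_succ] <;> ring

lemma exp_two_int : ∫ t in Set.Ioi (0:ℝ), rexp (-(2*t)) = 1/2 := by
  have := integral_comp_mul_left_Ioi (fun x => rexp (-x)) (a := 0) (b := 2) (by norm_num)
  simpa [integral_exp_neg_Ioi, integral_exp_Iic_zero] using this

/-- Lemma 5.6 of the paper: on the rays `z = 1 + (1 ± i)t`, `t ≥ 0`, of `γ_R`,
`Re Θ̂₊ ≤ −Λ¹²t⁴ − 2(2−K₂)Λ¹²` for all large `Λ`, uniformly for
`σ ≤ K₂ 3^{−1/3} Λ⁸` with `K₂ < 2`; hence `e^{Θ̂₊}` is exponentially small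
in every `L^p` norm, `1 ≤ p ≤ ∞`. -/
theorem stmt12 (c : ℝ) (hc3 : c ^ 3 = 3) (hc : 0 < c) (K₂ : ℝ) (hK₂ : K₂ < 2) :
    ∃ Λ₀ : ℝ, 1 ≤ Λ₀ ∧ ∀ Λ : ℝ, Λ₀ ≤ Λ → ∀ σ : ℝ, σ ≤ K₂ * c⁻¹ * Λ ^ 8 →
      ∀ ε : ℝ, (ε = 1 ∨ ε = -1) →
        (∀ t : ℝ, 0 ≤ t →
          (thetaHatPlus c Λ σ (1 + (1 + (ε : ℂ) * I) * (t : ℂ))).re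
            ≤ -Λ ^ 12 * t ^ 4 - 2 * (2 - K₂) * Λ ^ 12) ∧
        (∀ t : ℝ, 0 ≤ t →
          ‖Complex.exp (thetaHatPlus c Λ σ (1 + (1 + (ε : ℂ) * I) * (t : ℂ)))‖
            ≤ Real.exp (-2 * (2 - K₂) * Λ ^ 12)) ∧
        (∀ p : ℝ, 1 ≤ p →
          (2 * ∫ t in Set.Ioi (0 : ℝ),
              Real.exp (p * (thetaHatPlus c Λ σ (1 + (1 + (ε : ℂ) * I) * (t : ℂ))).re))
            ^ (1 / p)
            ≤ Real.exp (-2 * (2 - K₂) * Λ ^ 12)) := by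
  refine ⟨1, le_refl 1, fun Λ hΛ σ hσ ε hε => ?_⟩
  have hΛ1 : (1:ℝ) ≤ Λ := hΛ
  have hΛ12 : (1:ℝ) ≤ Λ ^ 12 := one_le_pow₀ hΛ1
  have hcσ : c * Λ ^ 4 * σ ≤ K₂ * Λ ^ 12 := by
    have h4 : (0:ℝ) < Λ ^ 4 := by positivity
    have := mul_le_mul_of_nonneg_left hσ (le_of_lt (mul_pos hc h4))
    calc c * Λ ^ 4 * σ = c * Λ ^ 4 * σ := rfl
      _ ≤ c * Λ ^ 4 * (K₂ * c⁻¹ * Λ ^ 8) := this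
      _ = K₂ * Λ ^ 12 * (c * c⁻¹) := by ring
      _ = K₂ * Λ ^ 12 := by rw [mul_inv_cancel₀ (ne_of_gt hc), mul_one]
  -- the key pointwise bound, slightly strengthened
  have key : ∀ t : ℝ, 0 ≤ t →
      (thetaHatPlus c Λ σ (1 + (1 + (ε : ℂ) * I) * (t : ℂ))).re
        ≤ -Λ ^ 12 * t ^ 4 - 2 * (2 - K₂) * Λ ^ 12 - 2 * t := by
    intro t ht
    rw [re_eval c Λ σ t ε hε]
    have h1 : c * Λ ^ 4 * σ * (2 + t) ≤ K₂ * Λ ^ 12 * (2 + t) :=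
      mul_le_mul_of_nonneg_right hcσ (by linarith)
    nlinarith [pow_nonneg ht 3, pow_nonneg ht 4, mul_nonneg (mul_nonneg (by linarith : (0:ℝ) ≤ Λ^12) ht) (sq_nonneg t), mul_le_mul_of_nonneg_left hΛ12 (mul_nonneg (by linarith : (0:ℝ) ≤ 4 - K₂ - 2) ht)]
  have keyre : ∀ t : ℝ, 0 ≤ t →
      (thetaHatPlus c Λ σ (1 + (1 + (ε : ℂ) * I) * (t : ℂ))).re
        ≤ -Λ ^ 12 * t ^ 4 - 2 * (2 - K₂) * Λ ^ 12 := by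
    intro t ht; have := key t ht; linarith
  refine ⟨keyre, fun t ht => ?_, fun p hp => ?_⟩
  · rw [Complex.norm_exp]
    apply Real.exp_le_exp.2
    have := keyre t ht
    nlinarith [pow_nonneg ht 4]
  · -- L^p bound
    set B : ℝ := 2 * (2 - K₂) * Λ ^ 12 with hB
    have hp0 : 0 < p := lt_of_lt_of_le one_pos hp
    have hBpos : 0 < B := by
      have : (0:ℝ) < 2 - K₂ := by linarith
      positivity
    have hg : IntegrableOn (fun t : ℝ => rexp (-(p*B)) * rexp (-(2*t))) (Set.Ioi 0) := by
      have := (exp_neg_integrableOn_Ioi 0 (show (0:ℝ) < 2 by norm_num)).const_mul (rexp (-(p*B)))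
      simpa [neg_mul, IntegrableOn] using this
    have hmono : ∀ t ∈ Set.Ioi (0:ℝ),
        rexp (p * (thetaHatPlus c Λ σ (1 + (1 + (ε : ℂ) * I) * (t : ℂ))).re)
          ≤ rexp (-(p*B)) * rexp (-(2*t)) := by
      intro t ht
      rw [← Real.exp_add]
      apply Real.exp_le_exp.2
      have h1 := key t (le_of_lt ht)
      have h2 : (thetaHatPlus c Λ σ (1 + (1 + (ε : ℂ) * I) * (t : ℂ))).re ≤ -B - 2*t := by
        have : -Λ ^ 12 * t ^ 4 ≤ 0 := by nlinarith [pow_nonneg (le_of_lt (show (0:ℝ) < t from ht)) 4]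
        linarith
      calc p * (thetaHatPlus c Λ σ (1 + (1 + (ε : ℂ) * I) * (t : ℂ))).re
          ≤ p * (-B - 2*t) := mul_le_mul_of_nonneg_left h2 (le_of_lt hp0)
        _ ≤ -(p*B) + -(2*t) := by nlinarith [mul_nonneg (by linarith : (0:ℝ) ≤ p - 1) (le_of_lt ht)]
    have hint : (∫ t in Set.Ioi (0:ℝ),
        rexp (p * (thetaHatPlus c Λ σ (1 + (1 + (ε : ℂ) * I) * (t : ℂ))).re))
          ≤ rexp (-(p*B)) * (1/2) := by
      calc _ ≤ ∫ t in Set.Ioi (0:ℝ), rexp (-(p*B)) * rexp (-(2*t)) := by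
              apply integral_mono_of_nonneg
              · filter_upwards with t using le_of_lt (Real.exp_pos _)
              · exact hg
              · filter_upwards [ae_restrict_mem measurableSet_Ioi] with t ht using hmono t ht
        _ = rexp (-(p*B)) * (1/2) := by
              rw [integral_const_mul, exp_two_int]
    have hnn : (0:ℝ) ≤ 2 * ∫ t in Set.Ioi (0:ℝ),
        rexp (p * (thetaHatPlus c Λ σ (1 + (1 + (ε : ℂ) * I) * (t : ℂ))).re) := by
      positivity
    have h2int : 2 * (∫ t in Set.Ioi (0:ℝ),
        rexp (p * (thetaHatPlus c Λ σ (1 + (1 + (ε : ℂ) * I) * (t : ℂ))).re))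
          ≤ rexp (-(p*B)) := by linarith
    calc (2 * ∫ t in Set.Ioi (0:ℝ),
            rexp (p * (thetaHatPlus c Λ σ (1 + (1 + (ε : ℂ) * I) * (t : ℂ))).re)) ^ (1/p)
        ≤ rexp (-(p*B)) ^ (1/p) := Real.rpow_le_rpow hnn h2int (by positivity)
      _ = rexp (-(p*B) * (1/p)) := by rw [← Real.exp_mul]
      _ = rexp (-B) := by rw [show -(p*B) * (1/p) = -B * (p / p) by ring, div_self (ne_of_gt hp0), mul_one]
      _ = rexp (-2 * (2 - K₂) * Λ ^ 12) := by rw [hB]; ring_nf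
end
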